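/- For a Gaussian random variable S ~ N(μ, σ²) with σ > 0 and threshold s* ∈ ℝ, the expectation E[max(s* - S, 0)] equals (s* - μ)·Φ((s* - μ)/σ) + σ·φ((s* - μ)/σ), where Φ and φ are the standard normal CDF and PDF. -/

import Mathlib

open MeasureTheory ProbabilityTheory

noncomputable def stdNormalPDF (z : ℝ) : ℝ :=
  (Real.sqrt (2 * Real.pi))⁻¹ * Real.exp (-z ^ 2 / 2)

noncomputable def stdNormalCDF (z : ℝ) : ℝ :=
  ∫ t in Set.Iic z, stdNormalPDF t

/-!
Writing `S = σ Z + μ` with `Z` standard normal and `a = (s* - μ) / σ`, the improvement is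
`σ (a - Z)⁺`, so it suffices to compute `E[(a - Z)⁺] = ∫_{z ≤ a} (a - z) φ z`. The term `a φ`
integrates to `a Φ(a)`, and `-z φ z = φ' z` integrates to `φ(a)` because `φ` vanishes at `-∞`.
-/

open Real Set Filter Topology

lemma stdNormalPDF_eq_gaussianPDFReal : stdNormalPDF = gaussianPDFReal 0 1 := by
  funext x
  simp [stdNormalPDF, gaussianPDFReal]

lemma integrable_stdNormalPDF : Integrable stdNormalPDF :=
  stdNormalPDF_eq_gaussianPDFReal ▸ integrable_gaussianPDFReal 0 1

lemma integrable_mul_stdNormalPDF : Integrable fun x : ℝ => x * stdNormalPDF x := by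
  convert (integrable_mul_exp_neg_mul_sq (by norm_num : (0 : ℝ) < 1 / 2)).const_mul
    (√(2 * π))⁻¹ using 2 with x
  rw [stdNormalPDF]
  ring_nf

lemma hasDerivAt_stdNormalPDF (x : ℝ) :
    HasDerivAt stdNormalPDF (-(x * stdNormalPDF x)) x := by
  have hexp : HasDerivAt (fun x : ℝ => -x ^ 2 / 2) (-x) x :=
    ((hasDerivAt_pow 2 x).neg.div_const 2).congr_deriv (by norm_num; ring)
  exact (hexp.exp.const_mul (√(2 * π))⁻¹).congr_deriv (by rw [stdNormalPDF]; ring)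

lemma integral_Iic_neg_mul_stdNormalPDF (a : ℝ) :
    ∫ x in Iic a, -(x * stdNormalPDF x) = stdNormalPDF a := by
  have hderiv : ∀ x ∈ Iic a, HasDerivAt stdNormalPDF (-(x * stdNormalPDF x)) x :=
    fun x _ => hasDerivAt_stdNormalPDF x
  have hint := integrable_mul_stdNormalPDF.neg.integrableOn (s := Iic a)
  have hlim : Tendsto stdNormalPDF atBot (𝓝 0) :=
    tendsto_zero_of_hasDerivAt_of_integrableOn_Iic hderiv hint
      integrable_stdNormalPDF.integrableOn
  simpa using integral_Iic_of_hasDerivAt_of_tendsto' hderiv hint hlim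

lemma integral_gaussianReal_zero_one (f : ℝ → ℝ) :
    ∫ x, f x ∂gaussianReal 0 1 = ∫ x, stdNormalPDF x * f x := by
  rw [integral_gaussianReal_eq_integral_smul one_ne_zero, stdNormalPDF_eq_gaussianPDFReal]
  rfl

lemma integral_max_sub_gaussianReal_zero_one (a : ℝ) :
    ∫ x, max (a - x) 0 ∂gaussianReal 0 1 = a * stdNormalCDF a + stdNormalPDF a := by
  have hsupp : ∀ x ∉ Iic a, stdNormalPDF x * max (a - x) 0 = 0 := fun x hx => by
    rw [max_eq_right (sub_nonpos.mpr (not_le.mp hx).le), mul_zero]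
  have hIic : EqOn (fun x => stdNormalPDF x * max (a - x) 0)
      (fun x => a * stdNormalPDF x + -(x * stdNormalPDF x)) (Iic a) := fun x hx => by
    dsimp only
    rw [max_eq_left (sub_nonneg.mpr hx)]
    ring
  rw [integral_gaussianReal_zero_one, ← setIntegral_eq_integral_of_forall_compl_eq_zero hsupp,
    setIntegral_congr_fun measurableSet_Iic hIic,
    integral_add (f := fun x => a * stdNormalPDF x) (g := fun x => -(x * stdNormalPDF x))
      (integrable_stdNormalPDF.integrableOn.const_mul a)
      integrable_mul_stdNormalPDF.neg.integrableOn,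
    integral_const_mul, integral_Iic_neg_mul_stdNormalPDF, stdNormalCDF]

lemma gaussianReal_eq_map_affine (μ : ℝ) {σ : ℝ} (hσ : 0 ≤ σ) :
    gaussianReal μ (σ.toNNReal ^ 2) = (gaussianReal 0 1).map (fun x => σ * x + μ) := by
  change _ = (gaussianReal 0 1).map ((· + μ) ∘ (σ * ·))
  rw [← Measure.map_map (measurable_add_const μ) (measurable_const_mul σ),
    gaussianReal_map_const_mul, gaussianReal_map_add_const, mul_zero, zero_add]
  congr 1
  ext
  simp [Real.coe_toNNReal _ hσ]

theorem expected_improvement_closed_form (μ σ sstar : ℝ) (hσ : 0 < σ) :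
    ∫ s, max (sstar - s) 0 ∂(gaussianReal μ (Real.toNNReal σ ^ 2)) =
      (sstar - μ) * stdNormalCDF ((sstar - μ) / σ) +
        σ * stdNormalPDF ((sstar - μ) / σ) := by
  set a := (sstar - μ) / σ
  have hσa : σ * a = sstar - μ := mul_div_cancel₀ _ hσ.ne'
  have hstd : ∀ x, max (sstar - (σ * x + μ)) 0 = σ * max (a - x) 0 := fun x => by
    rw [mul_max_of_nonneg _ _ hσ.le, mul_zero, mul_sub, hσa]
    ring_nf
  rw [gaussianReal_eq_map_affine μ hσ.le,
    integral_map (by fun_prop) (by fun_prop), funext hstd, integral_const_mul,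
    integral_max_sub_gaussianReal_zero_one, ← hσa]
  ring
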